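/- For every normal form t ≠ e and every normal form u of the rewrite system R over {d, e, +, ·}, the normal form of t·u is either e or an application-term (i.e. of the form d·v); moreover, if nf(t·u) = e then u = e. -/

import Mathlib

/-- Ground terms over constants d, e with binary operations + (add) and · (app). -/
inductive Tm : Type
  | d : Tm
  | e : Tm
  | add : Tm → Tm → Tm
  | app : Tm → Tm → Tm
  deriving DecidableEq

open Tm

/-- Root rewrite steps: instances of the oriented rules. -/
inductive Root : Tm → Tm → Prop
  | addE (x) : Root (add x e) x
  | eAdd (x) : Root (add e x) x
  | assoc (x y z) : Root (add (add x y) z) (add x (add y z))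
  | appAdd (x y z) : Root (app (add x y) z) (app y (app x z))
  | appD (x y) : Root (app (app d x) y) (app x (add y x))
  | appE (x) : Root (app e x) x
  | dE : Root (app d e) e

/-- One rewrite step: a root step applied at some subterm position. -/
inductive Step : Tm → Tm → Prop
  | root {t u} : Root t u → Step t u
  | addL {t t' u} : Step t t' → Step (add t u) (add t' u)
  | addR {t u u'} : Step u u' → Step (add t u) (add t u')
  | appL {t t' u} : Step t t' → Step (app t u) (app t' u)
  | appR {t u u'} : Step u u' → Step (app t u) (app t u')

/-- Zero or more rewrite steps. -/
def Steps : Tm → Tm → Prop := Relation.ReflTransGen Step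

/-- A normal form is a term to which no rule applies. -/
def NormalForm (t : Tm) : Prop := ∀ u, ¬ Step t u

/-- Provable equality in the equational theory (reflexive symmetric transitive
congruence closure of the rule instances). -/
def TermEq : Tm → Tm → Prop := Relation.EqvGen Step

/-!
If `t` is a normal form other than `e`, every rule that applies at the root of `t·u` produces
either `e` (rule `d·e → e`) or again an application whose head is a proper subterm of `t`, hence
normal and, because `t` is normal, different from `e`. So the terms `t·u` of this kind, together
with `e`, are closed under rewriting, and a normal application has head `d`.

For the second claim, `t·u →* e` forces `u →* e`, by well-founded induction along an
exponential interpretation `mu` that decreases under rewriting and on subterms. The rule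
`(d·x)·u → x·(u+x)` cannot lead to `e`, because `a + b →* e` forces `b →* e`, while `x` is
normal and `≠ e`.
-/

namespace Tm

def mu : Tm → ℕ
  | d => 2
  | e => 2
  | add x y => 2 * mu x + mu y
  | app x y => mu y * 3 ^ mu x

theorem two_le_mu : ∀ t, 2 ≤ mu t
  | d | e => le_rfl
  | add x y => by have := two_le_mu y; simp only [mu]; omega
  | app x y => (two_le_mu y).trans (Nat.le_mul_of_pos_right _ (by positivity))

theorem mu_lt_mu_add_right (a b : Tm) : mu b < mu (add a b) := by
  have := two_le_mu a; simp only [mu]; omega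

theorem mu_lt_mu_app_right (a b : Tm) : mu b < mu (app a b) := by
  have := two_le_mu b
  have : 1 < 3 ^ mu a := Nat.one_lt_pow (by have := two_le_mu a; omega) (by norm_num)
  simp only [mu]; nlinarith

theorem mu_app_lt_mu_app {a a' : Tm} (h : mu a < mu a') (b : Tm) : mu (app a b) < mu (app a' b) :=
  Nat.mul_lt_mul_of_pos_left (Nat.pow_lt_pow_right (by norm_num) h) (by have := two_le_mu b; omega)

end Tm

theorem Root.mu_lt {a b : Tm} (h : Root a b) : mu b < mu a := by
  cases h with
  | addE => simp only [mu]; omega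
  | eAdd => simp only [mu]; omega
  | assoc x y z => have := two_le_mu x; simp only [mu]; omega
  | appAdd x y z =>
    have := two_le_mu x
    simp only [mu, mul_assoc, ← pow_add]
    exact Nat.mul_lt_mul_of_pos_left (Nat.pow_lt_pow_right (by norm_num) (by omega))
      (by have := two_le_mu z; omega)
  | appD x y =>
    have hx := two_le_mu x
    have hy := two_le_mu y
    have hP : mu x < 3 ^ mu x := Nat.lt_pow_self (by norm_num)
    have hQ : 3 ^ mu x * 3 ≤ 3 ^ (8 * mu x) :=
      (pow_succ 3 (mu x)).symm.trans_le (Nat.pow_le_pow_right (by norm_num) (by omega))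
    have key : 2 * mu y + mu x < mu y * 3 ^ (8 * mu x) := by nlinarith
    calc (2 * mu y + mu x) * 3 ^ mu x < mu y * 3 ^ (8 * mu x) * 3 ^ mu x :=
          Nat.mul_lt_mul_of_pos_right key (by positivity)
      _ = mu (app (app d x) y) := by simp only [mu]; ring
  | appE => exact mu_lt_mu_app_right _ _
  | dE => simp [mu]

theorem Step.mu_lt {a b : Tm} (h : Step a b) : mu b < mu a := by
  induction h with
  | root h => exact h.mu_lt
  | addL _ ih => simp only [mu]; omega
  | addR _ ih => simp only [mu]; omega
  | appL _ ih => exact mu_app_lt_mu_app ih _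
  | appR _ ih =>
    simp only [mu]
    exact Nat.mul_lt_mul_of_pos_right ih (by positivity)

theorem normalForm_e : NormalForm e := by
  rintro _ ⟨⟨⟩⟩

theorem NormalForm.of_add_left {a b : Tm} (h : NormalForm (add a b)) : NormalForm a :=
  fun _ ha => h _ ha.addL

theorem NormalForm.of_add_right {a b : Tm} (h : NormalForm (add a b)) : NormalForm b :=
  fun _ hb => h _ hb.addR

theorem NormalForm.of_app_left {a b : Tm} (h : NormalForm (app a b)) : NormalForm a :=
  fun _ ha => h _ ha.appL

theorem NormalForm.of_app_right {a b : Tm} (h : NormalForm (app a b)) : NormalForm b :=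
  fun _ hb => h _ hb.appR

theorem NormalForm.add_left_ne_e {a b : Tm} (h : NormalForm (add a b)) : a ≠ e := by
  rintro rfl
  exact h _ (.root (.eAdd b))

theorem NormalForm.add_right_ne_e {a b : Tm} (h : NormalForm (add a b)) : b ≠ e := by
  rintro rfl
  exact h _ (.root (.addE a))

theorem NormalForm.app_d_right_ne_e {a : Tm} (h : NormalForm (app d a)) : a ≠ e := by
  rintro rfl
  exact h _ (.root .dE)

theorem NormalForm.eq_of_steps {t n : Tm} (ht : NormalForm t) (h : Steps t n) : n = t := by
  obtain rfl | ⟨c, hc, -⟩ := h.cases_head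
  · rfl
  · exact absurd hc (ht c)

theorem NormalForm.app_head_eq_d : ∀ {t u : Tm}, NormalForm (app t u) → t = d
  | d, _, _ => rfl
  | e, u, h => absurd (Step.root (Root.appE u)) (h _)
  | add x y, u, h => absurd (Step.root (Root.appAdd x y u)) (h _)
  | app c x, u, h => by
    obtain rfl := h.of_app_left.app_head_eq_d
    exact absurd (Step.root (Root.appD x u)) (h _)

def EOrNormalHeadedApp (s : Tm) : Prop :=
  s = e ∨ ∃ t u, s = app t u ∧ NormalForm t ∧ t ≠ e

theorem Step.eOrNormalHeadedApp {s s' : Tm} (hs : EOrNormalHeadedApp s) (h : Step s s') :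
    EOrNormalHeadedApp s' := by
  obtain rfl | ⟨t, u, rfl, ht, hte⟩ := hs
  · exact absurd h (normalForm_e _)
  cases h with
  | appL h => exact absurd h (ht _)
  | appR h => exact Or.inr ⟨t, _, rfl, ht, hte⟩
  | root h =>
    cases h with
    | appAdd => exact .inr ⟨_, _, rfl, ht.of_add_right, ht.add_right_ne_e⟩
    | appD => exact .inr ⟨_, _, rfl, ht.of_app_right, ht.app_d_right_ne_e⟩
    | appE => exact absurd rfl hte
    | dE => exact Or.inl rfl

theorem Steps.eOrNormalHeadedApp {s s' : Tm} (hs : EOrNormalHeadedApp s) (h : Steps s s') :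
    EOrNormalHeadedApp s' :=
  Relation.ReflTransGen.rec hs (fun _ hstep ih => Step.eOrNormalHeadedApp ih hstep) h

theorem steps_right_e_of_steps_add_e {a b : Tm} (h : Steps (add a b) e) : Steps b e := by
  obtain h | ⟨c, hc, hrest⟩ := h.cases_head
  · cases h
  have hlt := hc.mu_lt
  cases hc with
  | addL _ => exact steps_right_e_of_steps_add_e hrest
  | addR hb => exact .head hb (steps_right_e_of_steps_add_e hrest)
  | root h =>
    cases h with
    | addE => exact .refl
    | eAdd => exact hrest
    | assoc x y =>
      have := mu_lt_mu_add_right x (add y b)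
      exact steps_right_e_of_steps_add_e (steps_right_e_of_steps_add_e hrest)
termination_by mu (add a b)
decreasing_by all_goals subst_vars; omega

theorem steps_right_e_of_steps_app_e {t u : Tm} (ht : NormalForm t) (hte : t ≠ e)
    (h : Steps (app t u) e) : Steps u e := by
  obtain h | ⟨c, hc, hrest⟩ := h.cases_head
  · cases h
  have hlt := hc.mu_lt
  cases hc with
  | appL h => exact absurd h (ht _)
  | appR hu => exact .head hu (steps_right_e_of_steps_app_e ht hte hrest)
  | root h =>
    cases h with
    | appAdd x y =>
      have := mu_lt_mu_app_right y (app x u)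
      have := mu_app_lt_mu_app (mu_lt_mu_add_right y x) u
      have hxu : Steps (app x u) e :=
        steps_right_e_of_steps_app_e ht.of_add_right ht.add_right_ne_e hrest
      exact steps_right_e_of_steps_app_e ht.of_add_left ht.add_left_ne_e hxu
    | appD x =>
      have hx := ht.of_app_right
      have hux : Steps (add u x) e := steps_right_e_of_steps_app_e hx ht.app_d_right_ne_e hrest
      exact absurd (hx.eq_of_steps (steps_right_e_of_steps_add_e hux)).symm ht.app_d_right_ne_e
    | appE => exact absurd rfl hte
    | dE => exact .refl
termination_by mu (app t u)
decreasing_by all_goals subst_vars; omega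

theorem nf_app_shape :
    ∀ t u n : Tm, NormalForm t → t ≠ e → NormalForm u →
      Steps (app t u) n → NormalForm n →
      (n = e ∨ ∃ v : Tm, n = app d v) ∧ (n = e → u = e) := by
  intro t u n ht hte hu hs hn
  refine ⟨?_, fun hne => ?_⟩
  · obtain rfl | ⟨a, v, rfl, -, -⟩ := hs.eOrNormalHeadedApp (.inr ⟨t, u, rfl, ht, hte⟩)
    · exact .inl rfl
    · exact .inr ⟨v, by rw [hn.app_head_eq_d]⟩
  · subst hne
    exact (hu.eq_of_steps (steps_right_e_of_steps_app_e ht hte hs)).symm
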